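/- If γ, γ' ∈ Γ(1/8) = { ∑ a_k 8^k : a_k ∈ {0,2} } are distinct, then γ − γ' belongs to the zero set Z_{3/8} = { (2ℓ+1)·8^k / (4·3^k) : ℓ ∈ ℤ, k ≥ 1 } of μ̂_{3/8}. In particular, the exponentials {e_γ : γ ∈ Γ(1/8)} are orthogonal in L²(μ_{3/8}). -/

import Mathlib

/-!
A point of `Γ(1/8)` is `2 ∑ eₖ 8^k` with binary digits `eₖ`, so a difference of two distinct
points is `2 ∑ dₖ 8^k` with `dₖ ∈ {-1, 0, 1}` not all zero. Factoring out `8^j` at the lowest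
nonzero digit leaves an odd integer `c`, and `2 · 8^j · c = 3^(j+1) c · 8^(j+1) / (4 · 3^(j+1))`
with `3^(j+1) c` odd. Orthogonality follows because `e_γ · conj e_γ' = e_(γ - γ')`.
-/

open MeasureTheory Real ENNReal

/-- The set `Γ(1/8)` of finite sums `∑ aₖ 8^k` with digits `aₖ ∈ {0,2}`. -/
def Gamma8 : Set ℝ :=
  {x | ∃ (N : ℕ) (a : ℕ → ℝ), (∀ k, a k = 0 ∨ a k = 2) ∧
    x = ∑ k ∈ Finset.range N, a k * 8 ^ k}

/-- The zero set `Z_{3/8} = { (2ℓ+1) 8^k / (4 · 3^k) : ℓ ∈ ℤ, k ≥ 1 }`. -/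
def Z38 : Set ℝ :=
  {t | ∃ (k : ℕ) (l : ℤ), 1 ≤ k ∧ t = (2 * l + 1) * 8 ^ k / (4 * 3 ^ k)}

open Finset

theorem exists_eq_pow_mul_odd_of_sum_digits {b : ℤ} (hb : Even b) (M : ℕ) {d : ℕ → ℤ}
    (hd : ∀ k, d k = 0 ∨ Odd (d k)) (hs : ∑ k ∈ range M, d k * b ^ k ≠ 0) :
    ∃ (j : ℕ) (c : ℤ), Odd c ∧ ∑ k ∈ range M, d k * b ^ k = b ^ j * c := by
  induction M generalizing d with
  | zero => simp at hs
  | succ M ih =>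
    have hsplit : ∑ k ∈ range (M + 1), d k * b ^ k
        = d 0 + b * ∑ k ∈ range M, d (k + 1) * b ^ k := by
      rw [sum_range_succ', mul_sum, add_comm]
      simp only [pow_zero, mul_one, pow_succ]
      congr 1
      exact sum_congr rfl fun k _ => by ring
    rcases hd 0 with h0 | h0
    · have htail : ∑ k ∈ range M, d (k + 1) * b ^ k ≠ 0 := by
        intro h; apply hs; rw [hsplit, h0, h]; ring
      obtain ⟨j, c, hc, hj⟩ := ih (fun k => hd (k + 1)) htail
      exact ⟨j + 1, c, hc, by rw [hsplit, h0, hj]; ring⟩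
    · exact ⟨0, _, hsplit ▸ h0.add_even (hb.mul_right _), by rw [pow_zero, one_mul]⟩

theorem Gamma8.exists_binary_digits {x : ℝ} (hx : x ∈ Gamma8) :
    ∃ N, ∀ M, N ≤ M → ∃ e : ℕ → ℤ, (∀ k, e k = 0 ∨ e k = 1) ∧
      x = 2 * ∑ k ∈ range M, (e k : ℝ) * 8 ^ k := by
  obtain ⟨N, a, ha, rfl⟩ := hx
  refine ⟨N, fun M hM => ⟨fun k => if k < N ∧ a k = 2 then 1 else 0,
    fun k => by dsimp only; split_ifs <;> simp, ?_⟩⟩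
  rw [mul_sum, ← sum_range_add_sum_Ico _ hM, sum_eq_zero (s := Ico N M), add_zero]
  · refine sum_congr rfl fun k hk => ?_
    rcases ha k with h | h <;> simp [mem_range.1 hk, h]
  · intro k hk
    simp [(mem_Ico.1 hk).1]

theorem two_mul_pow_mul_odd_mem_Z38 (j : ℕ) {c : ℤ} (hc : Odd c) :
    2 * 8 ^ j * (c : ℝ) ∈ Z38 := by
  obtain ⟨l, hl⟩ := (Odd.pow (n := j + 1) (by decide : Odd (3 : ℤ))).mul hc
  refine ⟨j + 1, l, le_add_self, ?_⟩
  rw [show (2 * l + 1 : ℝ) = 3 ^ (j + 1) * c by exact_mod_cast hl.symm]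
  field_simp
  ring

theorem Gamma8.sub_mem_Z38 {γ γ' : ℝ} (h : γ ∈ Gamma8) (h' : γ' ∈ Gamma8) (hne : γ ≠ γ') :
    γ - γ' ∈ Z38 := by
  obtain ⟨N, hN⟩ := Gamma8.exists_binary_digits h
  obtain ⟨N', hN'⟩ := Gamma8.exists_binary_digits h'
  obtain ⟨e, he, rfl⟩ := hN (max N N') (le_max_left _ _)
  obtain ⟨e', he', rfl⟩ := hN' (max N N') (le_max_right _ _)
  have hdiff : 2 * ∑ k ∈ range (max N N'), (e k : ℝ) * 8 ^ k
      - 2 * ∑ k ∈ range (max N N'), (e' k : ℝ) * 8 ^ k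
      = 2 * ((∑ k ∈ range (max N N'), (e k - e' k) * 8 ^ k : ℤ) : ℝ) := by
    push_cast
    rw [← mul_sub, ← sum_sub_distrib]
    simp only [sub_mul]
  have hdigits : ∀ k, e k - e' k = 0 ∨ Odd (e k - e' k) := fun k => by
    rcases he k with h | h <;> rcases he' k with h' | h' <;> simp [h, h']
  have hs : ∑ k ∈ range (max N N'), (e k - e' k) * 8 ^ k ≠ 0 := by
    intro h0
    apply hne
    rw [← sub_eq_zero, hdiff, h0, Int.cast_zero, mul_zero]
  obtain ⟨j, c, hc, hjc⟩ :=
    exists_eq_pow_mul_odd_of_sum_digits (by decide) _ hdigits hs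
  rw [hdiff, hjc, Int.cast_mul, Int.cast_pow, ← mul_assoc]
  exact_mod_cast two_mul_pow_mul_odd_mem_Z38 j hc

theorem exp_mul_conj_exp (γ γ' x : ℝ) :
    Complex.exp (2 * π * Complex.I * γ * x) *
        (starRingEnd ℂ) (Complex.exp (2 * π * Complex.I * γ' * x))
      = Complex.exp (2 * π * Complex.I * ↑(γ - γ') * x) := by
  rw [← Complex.exp_conj, ← Complex.exp_add]
  congr 1
  simp only [map_mul, Complex.conj_I, Complex.conj_ofReal, map_ofNat]
  push_cast
  ring

theorem stmt15_general (μ : Measure ℝ)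
    (hzero : ∀ t ∈ Z38, (∫ x, Complex.exp (2 * π * Complex.I * t * x) ∂μ) = 0)
    (γ γ' : ℝ) (h : γ ∈ Gamma8) (h' : γ' ∈ Gamma8) (hne : γ ≠ γ') :
    γ - γ' ∈ Z38 ∧
      (∫ x, Complex.exp (2 * π * Complex.I * γ * x) *
        (starRingEnd ℂ) (Complex.exp (2 * π * Complex.I * γ' * x)) ∂μ) = 0 := by
  have hmem := Gamma8.sub_mem_Z38 h h' hne
  refine ⟨hmem, ?_⟩
  simp only [exp_mul_conj_exp]
  exact hzero _ hmem

theorem stmt15 (μ : Measure ℝ) [IsProbabilityMeasure μ]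
    (hzero : ∀ t ∈ Z38, (∫ x, Complex.exp (2 * π * Complex.I * t * x) ∂μ) = 0)
    (γ γ' : ℝ) (h : γ ∈ Gamma8) (h' : γ' ∈ Gamma8) (hne : γ ≠ γ') :
    γ - γ' ∈ Z38 ∧
      (∫ x, Complex.exp (2 * π * Complex.I * γ * x) *
        (starRingEnd ℂ) (Complex.exp (2 * π * Complex.I * γ' * x)) ∂μ) = 0 :=
  stmt15_general μ hzero γ γ' h h' hne
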